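/- arXiv:2108.01983 — 4 statements merged into one kernel-verified Lean document; each statement's English description precedes it below -/
import Mathlib

section
/- Under the Lipschitz condition ‖F'(y⁰)⁻¹(F'(y) - F'(y⁰))‖ ≤ ω₀ ‖y - y⁰‖ for all y in a convex open set D containing the ball of radius r = (1 - √(1 - 2h₀))/ω₀ around y⁰, where h₀ = ω₀‖d^{(1)}‖ < 1/2, the simplified Newton steps satisfy: there exists 0 < c < 1 with ‖d^{(k+1)}‖ ≤ c ‖d^{(k)}‖, and consequently ‖F(y^{(k)})‖ ≤ ‖F'(y⁰)‖ · c^k · ‖d^{(1)}‖ for all k. -/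
open Metric Finset Set

/-!
The remainder estimate `‖A⁻¹ (F (z + v) - F z - F'(y⁰) v)‖ ≤ ω₀ (‖z - y⁰‖ + ‖v‖ / 2) ‖v‖`, a mean
value inequality along the segment `[z, z + v]`, bounds each new step by
`ω₀ (S k + δ k / 2) δ k = ω₀ / 2 (S (k + 1) ^ 2 - S k ^ 2)`, where `δ k = ‖d (k + 1)‖` and the
partial sums `S k = δ 0 + ⋯ + δ (k - 1)` majorize `‖y k - y⁰‖`. Telescoping gives
`S (k + 1) ≤ δ 0 + ω₀ / 2 S k ^ 2`, so the partial sums never pass the smaller root `r` of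
`δ 0 + ω₀ / 2 r ^ 2 = r`: all iterates stay in the ball, and every step contracts by the factor
`ω₀ r = 1 - √(1 - 2 h₀) < 1`.
-/

theorem Convex.norm_map_remainder_le {Y Z : Type*} [NormedAddCommGroup Y] [NormedSpace ℝ Y]
    [NormedAddCommGroup Z] [NormedSpace ℝ Z] {F : Y → Z} {f' : Y → Y →L[ℝ] Z} {D : Set Y}
    (hD : Convex ℝ D) (hF : ∀ y ∈ D, HasFDerivAt F (f' y) y) (T : Z →L[ℝ] Y) {y0 : Y} {ω : ℝ}
    (hω : 0 ≤ ω) (hLip : ∀ w ∈ D, ‖T.comp (f' w - f' y0)‖ ≤ ω * ‖w - y0‖)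
    {z v : Y} (hz : z ∈ D) (hzv : z + v ∈ D) :
    ‖T (F (z + v) - F z - f' y0 v)‖ ≤ ω * (‖z - y0‖ + ‖v‖ / 2) * ‖v‖ := by
  have hseg : ∀ t ∈ Icc (0 : ℝ) 1, z + t • v ∈ D := fun t ht => by
    simpa using hD.add_smul_sub_mem hz hzv ht
  set g : ℝ → Y := fun t => T (F (z + t • v) - F z - t • f' y0 v)
  have hg : ∀ t ∈ Icc (0 : ℝ) 1, HasDerivAt g (T.comp (f' (z + t • v) - f' y0) v) t := by
    intro t ht
    have hpath : HasDerivAt (fun t : ℝ => z + t • v) v t := by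
      simpa using ((hasDerivAt_id t).smul_const v).const_add z
    have hdiff : HasDerivAt (fun t : ℝ => F (z + t • v) - F z - t • f' y0 v)
        (f' (z + t • v) v - f' y0 v) t :=
      ((((hF _ (hseg t ht)).comp_hasDerivAt t hpath).sub_const (F z)).sub
        ((hasDerivAt_id t).smul_const (f' y0 v))).congr_deriv (by simp)
    exact (T.hasFDerivAt.comp_hasDerivAt t hdiff).congr_deriv (by simp)
  have hB : ∀ t, HasDerivAt (fun t => ω * (‖z - y0‖ * t + ‖v‖ * t ^ 2 / 2) * ‖v‖)
      (ω * (‖z - y0‖ + ‖v‖ * t) * ‖v‖) t := fun t =>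
    (((((hasDerivAt_id t).const_mul ‖z - y0‖).add
      (((hasDerivAt_pow 2 t).const_mul ‖v‖).div_const 2)).const_mul ω).mul_const ‖v‖).congr_deriv
      (by simp only [Nat.cast_ofNat, Nat.add_one_sub_one, pow_one]; ring)
  have hbound : ∀ t ∈ Ico (0 : ℝ) 1,
      ‖T.comp (f' (z + t • v) - f' y0) v‖ ≤ ω * (‖z - y0‖ + ‖v‖ * t) * ‖v‖ := by
    intro t ht
    have hdist : ‖z + t • v - y0‖ ≤ ‖z - y0‖ + ‖v‖ * t := by
      calc ‖z + t • v - y0‖ = ‖(z - y0) + t • v‖ := by rw [add_sub_right_comm]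
        _ ≤ ‖z - y0‖ + ‖t • v‖ := norm_add_le _ _
        _ = ‖z - y0‖ + ‖v‖ * t := by rw [norm_smul, Real.norm_of_nonneg ht.1, mul_comm]
    calc _ ≤ ‖T.comp (f' (z + t • v) - f' y0)‖ * ‖v‖ := T.comp _ |>.le_opNorm v
      _ ≤ ω * ‖z + t • v - y0‖ * ‖v‖ := by
        gcongr; exact hLip _ (hseg t (Ico_subset_Icc_self ht))
      _ ≤ ω * (‖z - y0‖ + ‖v‖ * t) * ‖v‖ := by gcongr
  have := image_norm_le_of_norm_deriv_right_le_deriv_boundary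
    (fun t ht => (hg t ht).continuousAt.continuousWithinAt)
    (fun t ht => (hg t (Ico_subset_Icc_self ht)).hasDerivWithinAt) (by simp [g]) hB hbound
    (right_mem_Icc.2 zero_le_one)
  simpa [g] using this

noncomputable def kantorovichRadius (ω δ : ℝ) : ℝ := (1 - √(1 - 2 * (ω * δ))) / ω

section KantorovichRadius

variable {ω δ : ℝ}

theorem mul_kantorovichRadius (hω : 0 < ω) :
    ω * kantorovichRadius ω δ = 1 - √(1 - 2 * (ω * δ)) := by
  rw [kantorovichRadius, mul_div_cancel₀ _ hω.ne']

theorem kantorovichRadius_nonneg (hω : 0 < ω) (hδ : 0 ≤ δ) : 0 ≤ kantorovichRadius ω δ := by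
  have : √(1 - 2 * (ω * δ)) ≤ 1 := Real.sqrt_le_one.2 (by nlinarith)
  exact div_nonneg (by linarith) hω.le

theorem add_mul_kantorovichRadius_sq (hω : 0 < ω) (h : ω * δ ≤ 1 / 2) :
    δ + ω / 2 * kantorovichRadius ω δ ^ 2 = kantorovichRadius ω δ := by
  have hs := Real.sq_sqrt (show 0 ≤ 1 - 2 * (ω * δ) by linarith)
  rw [kantorovichRadius]
  set s := √(1 - 2 * (ω * δ))
  field_simp
  linear_combination hs

theorem mul_kantorovichRadius_lt_one (hω : 0 < ω) (h : ω * δ < 1 / 2) :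
    ω * kantorovichRadius ω δ < 1 := by
  rw [mul_kantorovichRadius hω]
  linarith [Real.sqrt_pos.2 (show 0 < 1 - 2 * (ω * δ) by linarith)]

end KantorovichRadius

section Majorant

variable {ω : ℝ} {δ : ℕ → ℝ}

theorem sum_range_le_kantorovichRadius (hω : 0 < ω) (hδ : ∀ k, 0 ≤ δ k) (h0 : ω * δ 0 ≤ 1 / 2)
    (hstep : ∀ k, ∑ i ∈ range k, δ i ≤ kantorovichRadius ω (δ 0) →
      ∑ i ∈ range (k + 1), δ i ≤ kantorovichRadius ω (δ 0) →
      δ (k + 1) ≤ ω * (∑ i ∈ range k, δ i + δ k / 2) * δ k) (k : ℕ) :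
    ∑ i ∈ range k, δ i ≤ kantorovichRadius ω (δ 0) := by
  set r := kantorovichRadius ω (δ 0)
  set S : ℕ → ℝ := fun k => ∑ i ∈ range k, δ i
  have hS : ∀ k, S (k + 1) = S k + δ k := fun k => sum_range_succ δ k
  have hS0 : ∀ k, 0 ≤ S k := fun k => sum_nonneg fun i _ => hδ i
  suffices h : ∀ k, S k ≤ r ∧ S (k + 1) ≤ δ 0 + ω / 2 * S k ^ 2 from (h k).1
  intro k
  induction k with
  | zero => exact ⟨kantorovichRadius_nonneg hω (hδ 0), by simp [S]⟩
  | succ k ih =>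
    have hr : S (k + 1) ≤ r := by
      calc S (k + 1) ≤ δ 0 + ω / 2 * S k ^ 2 := ih.2
        _ ≤ δ 0 + ω / 2 * r ^ 2 := by gcongr; exacts [hS0 k, ih.1]
        _ = r := add_mul_kantorovichRadius_sq hω h0
    refine ⟨hr, ?_⟩
    have hstep_k : δ (k + 1) ≤ ω * (S k + δ k / 2) * δ k := hstep k ih.1 hr
    have htelescope : ω * (S k + δ k / 2) * δ k = ω / 2 * (S (k + 1) ^ 2 - S k ^ 2) := by
      rw [hS k]; ring
    rw [hS (k + 1)]
    linarith [ih.2]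

theorem le_mul_kantorovichRadius_mul (hω : 0 < ω) (hδ : ∀ k, 0 ≤ δ k) (h0 : ω * δ 0 ≤ 1 / 2)
    (hstep : ∀ k, ∑ i ∈ range k, δ i ≤ kantorovichRadius ω (δ 0) →
      ∑ i ∈ range (k + 1), δ i ≤ kantorovichRadius ω (δ 0) →
      δ (k + 1) ≤ ω * (∑ i ∈ range k, δ i + δ k / 2) * δ k) (k : ℕ) :
    δ (k + 1) ≤ ω * kantorovichRadius ω (δ 0) * δ k := by
  have hk := sum_range_le_kantorovichRadius hω hδ h0 hstep k
  have hk1 := sum_range_le_kantorovichRadius hω hδ h0 hstep (k + 1)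
  refine (hstep k hk hk1).trans ?_
  rw [sum_range_succ] at hk1
  gcongr
  · exact hδ k
  · linarith [hδ k]

end Majorant

theorem norm_sub_zero_le_sum_range {Y : Type*} [SeminormedAddCommGroup Y] {y d : ℕ → Y}
    (hy : ∀ k, y (k + 1) = y k + d (k + 1)) (k : ℕ) :
    ‖y k - y 0‖ ≤ ∑ i ∈ range k, ‖d (i + 1)‖ := by
  rw [← sum_range_sub]
  refine (norm_sum_le _ _).trans_eq (sum_congr rfl fun i _ => ?_)
  rw [hy i, add_sub_cancel_left]

theorem stmt_1_general
    {Y Z : Type*} [NormedAddCommGroup Y] [NormedSpace ℝ Y]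
    [NormedAddCommGroup Z] [NormedSpace ℝ Z]
    (F : Y → Z) (D : Set Y) (hDconv : Convex ℝ D)
    (y0 : Y)
    (f' : Y → Y →L[ℝ] Z)
    (hdiff : ∀ y ∈ D, HasFDerivAt F (f' y) y)
    (A : Y ≃L[ℝ] Z) (hA : (A : Y →L[ℝ] Z) = f' y0)
    (y d : ℕ → Y)
    (hy0 : y 0 = y0)
    (hd : ∀ k : ℕ, d (k + 1) = -A.symm (F (y k)))
    (hy : ∀ k : ℕ, y (k + 1) = y k + d (k + 1))
    (ω₀ : ℝ) (hω₀ : 0 < ω₀)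
    (hLip : ∀ z ∈ D,
      ‖(A.symm : Z →L[ℝ] Y).comp (f' z - f' y0)‖ ≤ ω₀ * ‖z - y0‖)
    (h0 : ω₀ * ‖d 1‖ < 1 / 2)
    (hball :
      closedBall y0 ((1 - Real.sqrt (1 - 2 * (ω₀ * ‖d 1‖))) / ω₀) ⊆ D) :
    ∃ c : ℝ, 0 < c ∧ c < 1 ∧
      (∀ k : ℕ, 1 ≤ k → ‖d (k + 1)‖ ≤ c * ‖d k‖) ∧
      ∀ k : ℕ, ‖F (y k)‖ ≤ ‖(A : Y →L[ℝ] Z)‖ * c ^ k * ‖d 1‖ := by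
  set δ : ℕ → ℝ := fun i => ‖d (i + 1)‖
  set r := kantorovichRadius ω₀ (δ 0)
  have hmem : ∀ k, ∑ i ∈ range k, δ i ≤ r → y k ∈ D := fun k hk =>
    hball <| mem_closedBall_iff_norm.2 <| hy0 ▸ (norm_sub_zero_le_sum_range hy k).trans hk
  have hstep : ∀ k, ∑ i ∈ range k, δ i ≤ r → ∑ i ∈ range (k + 1), δ i ≤ r →
      δ (k + 1) ≤ ω₀ * (∑ i ∈ range k, δ i + δ k / 2) * δ k := by
    intro k hk hk1
    have hremainder := hDconv.norm_map_remainder_le hdiff (A.symm : Z →L[ℝ] Y) hω₀.le hLip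
      (hmem k hk) (hy k ▸ hmem (k + 1) hk1)
    have hnext : (A.symm : Z →L[ℝ] Y) (F (y k + d (k + 1)) - F (y k) - f' y0 (d (k + 1)))
        = -d (k + 2) := by
      rw [← hy k, ← hA, map_sub, map_sub, hd (k + 1), hd k]
      simp
    rw [hnext, norm_neg] at hremainder
    refine hremainder.trans ?_
    gcongr
    exact hy0 ▸ norm_sub_zero_le_sum_range hy k
  have hcontract := le_mul_kantorovichRadius_mul (δ := δ) hω₀ (fun i => norm_nonneg _) h0.le hstep
  -- `ω₀ * r` vanishes when `d 1 = 0`, hence the `max`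
  set c := max (ω₀ * r) (1 / 2)
  have hδc : ∀ k, δ (k + 1) ≤ c * δ k := fun k =>
    (hcontract k).trans (by gcongr; exact le_max_left _ _)
  refine ⟨c, by positivity, max_lt (mul_kantorovichRadius_lt_one hω₀ h0) (by norm_num),
    fun k hk => ?_, fun k => ?_⟩
  · obtain ⟨j, rfl⟩ := Nat.exists_eq_add_of_le' hk
    exact hδc j
  · have hFy : F (y k) = -(A : Y →L[ℝ] Z) (d (k + 1)) := by simp [hd]
    calc ‖F (y k)‖ ≤ ‖(A : Y →L[ℝ] Z)‖ * δ k := by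
          rw [hFy, norm_neg]; exact ContinuousLinearMap.le_opNorm _ _
      _ ≤ ‖(A : Y →L[ℝ] Z)‖ * (c ^ k * δ 0) := by
        gcongr; exact le_geom (by positivity) k fun i _ => hδc i
      _ = ‖(A : Y →L[ℝ] Z)‖ * c ^ k * ‖d 1‖ := by ring

/-- Contraction of the simplified Newton steps and residual decay under an
affine covariant Lipschitz condition. -/
theorem stmt_1
    {Y Z : Type*} [NormedAddCommGroup Y] [NormedSpace ℝ Y] [CompleteSpace Y]
    [NormedAddCommGroup Z] [NormedSpace ℝ Z] [CompleteSpace Z]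
    (F : Y → Z) (D : Set Y) (hDopen : IsOpen D) (hDconv : Convex ℝ D)
    (y0 : Y) (hy0D : y0 ∈ D)
    (f' : Y → Y →L[ℝ] Z)
    (hdiff : ∀ y ∈ D, HasFDerivAt F (f' y) y)
    (hcont : ContinuousOn f' D)
    (A : Y ≃L[ℝ] Z) (hA : (A : Y →L[ℝ] Z) = f' y0)
    (y d : ℕ → Y)
    (hy0 : y 0 = y0)
    (hd : ∀ k : ℕ, d (k + 1) = -A.symm (F (y k)))
    (hy : ∀ k : ℕ, y (k + 1) = y k + d (k + 1))
    (ω₀ : ℝ) (hω₀ : 0 < ω₀)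
    (hLip : ∀ z ∈ D,
      ‖(A.symm : Z →L[ℝ] Y).comp (f' z - f' y0)‖ ≤ ω₀ * ‖z - y0‖)
    (h0 : ω₀ * ‖d 1‖ < 1 / 2)
    (hball :
      closedBall y0 ((1 - Real.sqrt (1 - 2 * (ω₀ * ‖d 1‖))) / ω₀) ⊆ D) :
    ∃ c : ℝ, 0 < c ∧ c < 1 ∧
      (∀ k : ℕ, 1 ≤ k → ‖d (k + 1)‖ ≤ c * ‖d k‖) ∧
      ∀ k : ℕ, ‖F (y k)‖ ≤ ‖(A : Y →L[ℝ] Z)‖ * c ^ k * ‖d 1‖ :=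
  stmt_1_general F D hDconv y0 f' hdiff A hA y d hy0 hd hy ω₀ hω₀ hLip h0 hball
end

section
/- Let V be a vector space, L : V → V linear, and suppose the sequences (w_k)_{k≥0}, (v_k)_{k≥0} ⊂ V satisfy the θ-scheme recursions (w_{k+1} - w_k)/Δt = L(θ w_{k+1} + (1-θ) w_k) with (Id + Δt(1-θ)L) w₀ = F, and (v_{k+1} - v_k)/Δt = L(θ v_{k+1} + (1-θ) v_k) + g with v₀ = y₀ - ȳ₀. Then d_k := v_k + Δt Σ_{j=0}^{k-1} w_{k-j} u_j satisfies d₀ = y₀ - ȳ₀ and (d_{k+1} - d_k)/Δt = L(θ d_{k+1} + (1-θ) d_k) + g + F u_k for all 0 ≤ k < K. -/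
/-- Discrete convolution formula for the θ-scheme: the convolution of the
impulse response with the control plus the offset solution solves the
θ-scheme with right-hand side g + F u_k. -/
theorem stmt_5
    {V : Type*} [AddCommGroup V] [Module ℝ V]
    (L : V →ₗ[ℝ] V) (Δt θ : ℝ) (hΔt : 0 < Δt)
    (hθ : θ ∈ Set.Icc (1 / 2 : ℝ) 1)
    (K : ℕ) (F g y₀ ybar₀ : V) (u : ℕ → ℝ)
    (w v : ℕ → V)
    (hw : ∀ k : ℕ, w (k + 1) - w k = Δt • L (θ • w (k + 1) + (1 - θ) • w k))
    (hw0 : w 0 + (Δt * (1 - θ)) • L (w 0) = F)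
    (hv : ∀ k : ℕ,
      v (k + 1) - v k = Δt • (L (θ • v (k + 1) + (1 - θ) • v k) + g))
    (hv0 : v 0 = y₀ - ybar₀)
    (d : ℕ → V)
    (hdd : ∀ k : ℕ, d k = v k + Δt • ∑ j ∈ Finset.range k, u j • w (k - j)) :
    d 0 = y₀ - ybar₀ ∧
      ∀ k : ℕ, k < K →
        d (k + 1) - d k
          = Δt • (L (θ • d (k + 1) + (1 - θ) • d k) + g + u k • F) := by
  constructor
  · rw [hdd 0]; simp [hv0]
  · intro k _
    have h1 : v (k + 1) - v k
        = (Δt * θ) • L (v (k + 1)) + (Δt * (1 - θ)) • L (v k) + Δt • g := by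
      rw [hv k]; simp only [map_add, map_smul, smul_add, smul_smul]
    have h3 : w 1 = (Δt * θ) • L (w 1) + F := by
      have a := hw 0
      simp only [map_add, map_smul, smul_add, smul_smul] at a
      have a' : w 1 = w 0 + ((Δt * θ) • L (w 1) + (Δt * (1 - θ)) • L (w 0)) := by
        rw [← a]; abel
      rw [← sub_eq_zero]
      calc w 1 - ((Δt * θ) • L (w 1) + F)
          = (w 1 - (w 0 + ((Δt * θ) • L (w 1) + (Δt * (1 - θ)) • L (w 0))))
            + ((w 0 + (Δt * (1 - θ)) • L (w 0)) - F) := by abel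
        _ = 0 := by rw [sub_eq_zero.mpr a', sub_eq_zero.mpr hw0]; simp
    have h2 : (∑ j ∈ Finset.range k, u j • w (k + 1 - j))
          - ∑ j ∈ Finset.range k, u j • w (k - j)
        = (Δt * θ) • L (∑ j ∈ Finset.range k, u j • w (k + 1 - j))
          + (Δt * (1 - θ)) • L (∑ j ∈ Finset.range k, u j • w (k - j)) := by
      rw [← Finset.sum_sub_distrib, map_sum, map_sum, Finset.smul_sum,
        Finset.smul_sum, ← Finset.sum_add_distrib]
      refine Finset.sum_congr rfl fun j hj => ?_
      have hj' : k + 1 - j = (k - j) + 1 := by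
        have := Finset.mem_range.mp hj; omega
      rw [hj', ← smul_sub, hw (k - j)]
      simp only [map_add, map_smul, smul_add, smul_smul]
      module
    rw [hdd (k + 1), hdd k, Finset.sum_range_succ]
    have hk1 : k + 1 - k = 1 := by omega
    rw [hk1]
    simp only [map_add, map_smul, smul_add, smul_smul]
    rw [← sub_eq_zero]
    have e1 := sub_eq_zero.mpr h1
    have e2 := sub_eq_zero.mpr h2
    have e3 := sub_eq_zero.mpr h3
    calc _ = (v (k + 1) - v k
            - ((Δt * θ) • L (v (k + 1)) + (Δt * (1 - θ)) • L (v k) + Δt • g))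
          + Δt • ((∑ j ∈ Finset.range k, u j • w (k + 1 - j))
              - (∑ j ∈ Finset.range k, u j • w (k - j))
            - ((Δt * θ) • L (∑ j ∈ Finset.range k, u j • w (k + 1 - j))
              + (Δt * (1 - θ)) • L (∑ j ∈ Finset.range k, u j • w (k - j))))
          + (Δt * u k) • (w 1 - ((Δt * θ) • L (w 1) + F)) := by module
      _ = 0 := by rw [e1, e2, e3]; simp
end

section
/- Let B ⊂ W be a bounded subset of a Hilbert space W and w ∈ L²(0,T; W). Then the operator Y* : W → L²(0,T;ℝ), (Y*f)(t) = (f, w(t))_W, maps B to a relatively compact subset of L²(0,T;ℝ); i.e., Y* is a compact operator. -/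
open MeasureTheory
open scoped ENNReal RealInnerProductSpace

/-!
Approximate `w` in `Lᵖ` by a simple function `s`. The operator `f ↦ (t ↦ ⟪f, s t⟫)` is a finite
sum of rank-one operators, one for each value of `s`, hence compact, and by Cauchy–Schwarz it is
within `‖w - s‖ₚ` of `K` in operator norm. Since compact operators into a Banach space form a
closed set, `K` is compact.
-/

theorem ContinuousLinearMap.isCompactOperator_smulRight {𝕜 E F : Type*}
    [NontriviallyNormedField 𝕜] [LocallyCompactSpace 𝕜] [NormedAddCommGroup E] [NormedSpace 𝕜 E]
    [NormedAddCommGroup F] [NormedSpace 𝕜 F] (L : E →L[𝕜] 𝕜) (x : F) :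
    IsCompactOperator (L.smulRight x) :=
  (isCompactOperator_of_locallyCompactSpace_dom L).clm_comp (toSpanSingleton 𝕜 x)

theorem ContinuousLinearMap.norm_sub_le_of_ae_eq_inner {α W : Type*} [MeasurableSpace α]
    {μ : Measure α} [NormedAddCommGroup W] [InnerProductSpace ℝ W] {p : ℝ≥0∞} [Fact (1 ≤ p)]
    {w v : α → W} {K K' : W →L[ℝ] Lp ℝ p μ} (hK : ∀ f, K f =ᵐ[μ] fun t => ⟪f, w t⟫)
    (hK' : ∀ f, K' f =ᵐ[μ] fun t => ⟪f, v t⟫) (hwv : eLpNorm (w - v) p μ ≠ ∞) :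
    ‖K - K'‖ ≤ (eLpNorm (w - v) p μ).toReal := by
  refine opNorm_le_bound _ ENNReal.toReal_nonneg fun f => ?_
  have hdiff : ⇑(K f - K' f) =ᵐ[μ] fun t => ⟪f, (w - v) t⟫ := by
    filter_upwards [Lp.coeFn_sub (K f) (K' f), hK f, hK' f] with t h h₁ h₂
    rw [h, Pi.sub_apply, h₁, h₂, Pi.sub_apply, inner_sub_right]
  have hle : eLpNorm (fun t => ⟪f, (w - v) t⟫) p μ ≤ ENNReal.ofReal ‖f‖ * eLpNorm (w - v) p μ :=
    eLpNorm_le_mul_eLpNorm_of_ae_le_mul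
      (Filter.Eventually.of_forall fun t => by simpa using abs_real_inner_le_norm f ((w - v) t)) p
  rw [sub_apply, Lp.norm_def, eLpNorm_congr_ae hdiff, mul_comm]
  calc (eLpNorm (fun t => ⟪f, (w - v) t⟫) p μ).toReal
      ≤ (ENNReal.ofReal ‖f‖ * eLpNorm (w - v) p μ).toReal :=
        ENNReal.toReal_mono (ENNReal.mul_ne_top ENNReal.ofReal_ne_top hwv) hle
    _ = ‖f‖ * (eLpNorm (w - v) p μ).toReal := by
        rw [ENNReal.toReal_mul, ENNReal.toReal_ofReal (norm_nonneg f)]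

namespace MeasureTheory.SimpleFunc

variable {α W : Type*} [MeasurableSpace α] [NormedAddCommGroup W] [InnerProductSpace ℝ W]
  (p : ℝ≥0∞) [Fact (1 ≤ p)] (μ : Measure α) [IsFiniteMeasure μ]

noncomputable def innerLp (s : SimpleFunc α W) : W →L[ℝ] Lp ℝ p μ :=
  ∑ c ∈ s.range,
    (innerSL ℝ c).smulRight (indicatorConstLp p (s.measurableSet_fiber c) (measure_ne_top μ _) 1)

theorem isCompactOperator_innerLp (s : SimpleFunc α W) : IsCompactOperator (innerLp p μ s) :=
  (compactOperator (RingHom.id ℝ) W (Lp ℝ p μ)).sum_mem fun _ _ =>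
    ContinuousLinearMap.isCompactOperator_smulRight _ _

theorem innerLp_ae_eq (s : SimpleFunc α W) (f : W) : innerLp p μ s f =ᵐ[μ] fun t => ⟪f, s t⟫ := by
  classical
  have hterm : ∀ᵐ t ∂μ, ∀ c ∈ s.range,
      (⟪c, f⟫ • indicatorConstLp p (s.measurableSet_fiber c) (measure_ne_top μ _) (1 : ℝ) :
        Lp ℝ p μ) t = (s ⁻¹' {c}).indicator (fun _ => ⟪c, f⟫) t := by
    refine (Filter.eventually_all_finset _).mpr fun c _ => ?_
    filter_upwards [Lp.coeFn_smul ⟪c, f⟫ (indicatorConstLp p (s.measurableSet_fiber c)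
      (measure_ne_top μ _) (1 : ℝ)), indicatorConstLp_coeFn (p := p) (μ := μ)
      (hs := s.measurableSet_fiber c) (hμs := measure_ne_top μ _) (c := (1 : ℝ))] with t h₁ h₂
    rw [h₁, Pi.smul_apply, h₂]
    simp [Set.indicator_apply]
  filter_upwards [Lp.coeFn_fun_finsetSum (E := ℝ) (p := p) (μ := μ) s.range _, hterm]
    with t hsum hterm
  simp only [innerLp, sum_apply, ContinuousLinearMap.smulRight_apply,
    innerSL_apply_apply] at hsum ⊢
  rw [hsum, Finset.sum_congr rfl hterm]
  simp [Set.indicator_apply, real_inner_comm]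

end MeasureTheory.SimpleFunc

theorem isCompactOperator_of_ae_eq_inner {α W : Type*} [MeasurableSpace α] {μ : Measure α}
    [IsFiniteMeasure μ] [NormedAddCommGroup W] [InnerProductSpace ℝ W] {p : ℝ≥0∞} [Fact (1 ≤ p)]
    (hp : p ≠ ∞) {w : α → W} (hw : MemLp w p μ) (K : W →L[ℝ] Lp ℝ p μ)
    (hK : ∀ f, K f =ᵐ[μ] fun t => ⟪f, w t⟫) :
    IsCompactOperator K := by
  refine isClosed_setOfPred_isCompactOperator.closure_subset (Metric.mem_closure_iff.mpr ?_)
  intro ε hε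
  obtain ⟨s, hs, -⟩ :=
    hw.exists_simpleFunc_eLpNorm_sub_lt hp (ENNReal.ofReal_pos.mpr hε).ne'
  refine ⟨s.innerLp p μ, s.isCompactOperator_innerLp p μ, ?_⟩
  rw [dist_eq_norm]
  exact (ContinuousLinearMap.norm_sub_le_of_ae_eq_inner hK (s.innerLp_ae_eq p μ)
    (hs.trans ENNReal.ofReal_lt_top).ne).trans_lt (ENNReal.toReal_lt_of_lt_ofReal hs)

theorem stmt_10_general
    {W : Type*} [NormedAddCommGroup W] [InnerProductSpace ℝ W]
    (T : ℝ) (w : ℝ → W)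
    (hw : MemLp w 2 (volume.restrict (Set.Icc 0 T)))
    (K : W →L[ℝ] Lp ℝ 2 (volume.restrict (Set.Icc 0 T)))
    (hK : ∀ f : W,
      (K f : ℝ → ℝ) =ᵐ[volume.restrict (Set.Icc 0 T)]
        fun t => (inner ℝ f (w t) : ℝ)) :
    (∀ B : Set W, Bornology.IsBounded B →
        IsCompact (closure ((fun f => K f) '' B)))
      ∧ IsCompactOperator K := by
  have hcompact : IsCompactOperator K :=
    isCompactOperator_of_ae_eq_inner ENNReal.ofNat_ne_top hw K hK
  refine ⟨fun B hB => ?_, hcompact⟩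
  exact hcompact.isCompact_closure_image_of_bounded (𝕜₁ := ℝ)
    (f := (K : W →ₗ[ℝ] Lp ℝ 2 (volume.restrict (Set.Icc 0 T)))) hB

/-- The operator `Y* : W → L²(0,T;ℝ)`, `(Y*f)(t) = (f, w(t))_W`, is compact:
it maps bounded subsets of `W` to relatively compact subsets of `L²(0,T)`. -/
theorem stmt_10
    {W : Type*} [NormedAddCommGroup W] [InnerProductSpace ℝ W]
    [CompleteSpace W]
    (T : ℝ) (hT : 0 < T) (w : ℝ → W)
    (hw : MemLp w 2 (volume.restrict (Set.Icc 0 T)))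
    (K : W →L[ℝ] Lp ℝ 2 (volume.restrict (Set.Icc 0 T)))
    (hK : ∀ f : W,
      (K f : ℝ → ℝ) =ᵐ[volume.restrict (Set.Icc 0 T)]
        fun t => (inner ℝ f (w t) : ℝ)) :
    (∀ B : Set W, Bornology.IsBounded B →
        IsCompact (closure ((fun f => K f) '' B)))
      ∧ IsCompactOperator K :=
  stmt_10_general T w hw K hK
end

section
/- Let V be a vector space, L : V → V linear, Δt > 0, θ ∈ [1/2,1]. Suppose (β_k) solves the homogeneous θ-scheme (β_{k+1} - β_k)/Δt = L(θ β_{k+1} + (1-θ)β_k) with (Id + Δt(1-θ)L)β₀ = g for some g ∈ V. Then e_k := Δt Σ_{ℓ=0}^{k-1} β_{k-ℓ} u_ℓ satisfies e₀ = 0 and (e_{k+1} - e_k)/Δt = L(θ e_{k+1} + (1-θ)e_k) + g u_k. -/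
/-- Discrete Duhamel/convolution lemma for the θ-scheme: the discrete
convolution of the homogeneous impulse response `β` with the scalar control
`u` solves the θ-scheme with right-hand side `g u_k` and zero initial data. -/
theorem stmt_12
    {V : Type*} [AddCommGroup V] [Module ℝ V]
    (L : V →ₗ[ℝ] V) (Δt θ : ℝ) (hΔt : 0 < Δt)
    (hθ : θ ∈ Set.Icc (1 / 2 : ℝ) 1)
    (g : V) (u : ℕ → ℝ)
    (β : ℕ → V)
    (hβ : ∀ k : ℕ, β (k + 1) - β k = Δt • L (θ • β (k + 1) + (1 - θ) • β k))
    (hβ0 : β 0 + (Δt * (1 - θ)) • L (β 0) = g)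
    (e : ℕ → V)
    (he : ∀ k : ℕ, e k = Δt • ∑ ℓ ∈ Finset.range k, u ℓ • β (k - ℓ)) :
    e 0 = 0 ∧
      ∀ k : ℕ,
        e (k + 1) - e k
          = Δt • (L (θ • e (k + 1) + (1 - θ) • e k) + u k • g) := by
  have hβ1 : β 1 = g + (Δt * θ) • L (β 1) := by
    have h0 := hβ 0
    rw [map_add, map_smul, map_smul] at h0
    rw [← hβ0]
    linear_combination (norm := module) h0
  constructor
  · simp [he 0]
  · intro k
    have hsplit : (∑ ℓ ∈ Finset.range (k+1), u ℓ • β (k+1-ℓ))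
        = (∑ ℓ ∈ Finset.range k, u ℓ • β (k+1-ℓ)) + u k • β 1 := by
      rw [Finset.sum_range_succ]; simp
    have hterm : ∀ ℓ ∈ Finset.range k,
        u ℓ • β (k+1-ℓ) - u ℓ • β (k-ℓ)
          = Δt • (θ • (u ℓ • L (β (k+1-ℓ))) + (1-θ) • (u ℓ • L (β (k-ℓ)))) := by
      intro ℓ hℓ
      have hℓk : ℓ < k := Finset.mem_range.mp hℓ
      have h := hβ (k - ℓ)
      have hsub : k - ℓ + 1 = k + 1 - ℓ := by omega
      rw [hsub, map_add, map_smul, map_smul] at h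
      rw [← smul_sub, h]
      module
    have hsum : (∑ ℓ ∈ Finset.range k, u ℓ • β (k+1-ℓ))
          - (∑ ℓ ∈ Finset.range k, u ℓ • β (k-ℓ))
        = Δt • (θ • (∑ ℓ ∈ Finset.range k, u ℓ • L (β (k+1-ℓ)))
            + (1-θ) • (∑ ℓ ∈ Finset.range k, u ℓ • L (β (k-ℓ)))) := by
      rw [← Finset.sum_sub_distrib, Finset.sum_congr rfl hterm,
        smul_add, Finset.smul_sum, Finset.smul_sum, Finset.smul_sum,
        Finset.smul_sum, ← Finset.sum_add_distrib]
      exact Finset.sum_congr rfl fun ℓ _ => by rw [smul_add]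
    have hLS1 : L (∑ ℓ ∈ Finset.range (k+1), u ℓ • β (k+1-ℓ))
        = (∑ ℓ ∈ Finset.range k, u ℓ • L (β (k+1-ℓ))) + u k • L (β 1) := by
      rw [hsplit, map_add, map_smul, map_sum]
      simp [map_smul]
    have hLS0 : L (∑ ℓ ∈ Finset.range k, u ℓ • β (k-ℓ))
        = ∑ ℓ ∈ Finset.range k, u ℓ • L (β (k-ℓ)) := by
      rw [map_sum]; simp [map_smul]
    rw [he (k+1), he k, map_add, map_smul, map_smul, map_smul, map_smul, hLS1, hLS0,
      hsplit]
    linear_combination (norm := module) Δt • hsum + (Δt * u k) • hβ1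
end
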